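/- arXiv:0802.2852 — 7 statements merged into one kernel-verified Lean document; each statement's English description precedes it below -/
import Mathlib

section
/- Let L = ⌊log₂ n⌋ and p_i = Σ_{d ∈ I_i} μ(d) where I_i = [2^i, 2^{i+1}) for 0 ≤ i < L and I_L = [2^L, n]. If p_i > 0 for all 0 ≤ i ≤ L−1, then for every starting state a the expected hitting time of 0 for the token process satisfies T_a ≤ 2/p_{j−1} + 2/p_{j−2} + ... + 2/p_1 + 3/p_0, where j is such that a ∈ I_j. -/
/-!
Any supersolution `f` of the hitting-time recurrence with `f 0 ≥ 0` dominates `T`, by strong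
induction on the state. We take the step function that jumps by `1/p_0` at `1` and by `1/p_i`
at each of `2^(i+1)` and `3·2^i`. If `a ∈ I_j` with `j ≥ 1`, every step `d ∈ I_{j-1}` crosses
one of the two jumps of size `1/p_{j-1}` lying in `I_j`, so the expected one-step decrease of
`f` is at least `p_{j-1} · (1/p_{j-1}) = 1`; this is the supersolution inequality. On `I_j` the
step function is at most `1/p_0 + ∑_{i<j} 2/p_i`.
-/

open Finset

def IsSupersolution (μ : ℕ → ℝ) (n : ℕ) (f : ℕ → ℝ) : Prop :=
  ∀ a ∈ Icc 1 n, 1 + ∑ d ∈ Icc 1 a, μ d * f (a - d) ≤ (∑ d ∈ Icc 1 a, μ d) * f a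

lemma le_of_supersolution {n : ℕ} {μ T f : ℕ → ℝ} (hμ : ∀ d, 0 ≤ μ d) (hμ1 : 0 < μ 1)
    (hT0 : T 0 = 0) (hf0 : 0 ≤ f 0)
    (hT : ∀ a ∈ Icc 1 n,
      (∑ d ∈ Icc 1 a, μ d) * T a = 1 + ∑ d ∈ Icc 1 a, μ d * T (a - d))
    (hf : IsSupersolution μ n f) :
    ∀ a ≤ n, T a ≤ f a := by
  intro a
  induction a using Nat.strong_induction_on with
  | _ a ih =>
  intro han
  obtain rfl | ha := Nat.eq_zero_or_pos a
  · rwa [hT0]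
  have hmem : a ∈ Icc 1 n := mem_Icc.2 ⟨ha, han⟩
  have hstep : ∑ d ∈ Icc 1 a, μ d * T (a - d) ≤ ∑ d ∈ Icc 1 a, μ d * f (a - d) :=
    sum_le_sum fun d hd =>
      mul_le_mul_of_nonneg_left (ih _ (by simp at hd; omega) (by omega)) (hμ d)
  have hmass : 0 < ∑ d ∈ Icc 1 a, μ d :=
    hμ1.trans_le (single_le_sum (fun d _ => hμ d) (mem_Icc.2 ⟨le_rfl, ha⟩))
  exact le_of_mul_le_mul_left (by linarith [hT a hmem, hf a hmem]) hmass

lemma supersolution_ineq_of_drop {μ f : ℕ → ℝ} (hμ : ∀ d, 0 ≤ μ d) (hf : Monotone f) {a : ℕ}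
    {S : Finset ℕ} (hS : S ⊆ Icc 1 a) (hmass : 0 < ∑ d ∈ S, μ d)
    (hdrop : ∀ d ∈ S, f (a - d) + 1 / ∑ d ∈ S, μ d ≤ f a) :
    1 + ∑ d ∈ Icc 1 a, μ d * f (a - d) ≤ (∑ d ∈ Icc 1 a, μ d) * f a := by
  have hgap : 1 ≤ ∑ d ∈ Icc 1 a, μ d * (f a - f (a - d)) :=
    calc (1 : ℝ) = ∑ d ∈ S, μ d * (1 / ∑ d ∈ S, μ d) := by
          rw [← sum_mul]; field_simp
      _ ≤ ∑ d ∈ S, μ d * (f a - f (a - d)) :=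
          sum_le_sum fun d hd => mul_le_mul_of_nonneg_left (by linarith [hdrop d hd]) (hμ d)
      _ ≤ ∑ d ∈ Icc 1 a, μ d * (f a - f (a - d)) :=
          sum_le_sum_of_subset_of_nonneg hS fun d _ _ =>
            mul_nonneg (hμ d) (sub_nonneg.2 (hf (Nat.sub_le a d)))
  simp only [mul_sub, sum_sub_distrib, ← sum_mul] at hgap
  linarith

lemma sum_add_le_sum_of_le_of_add_le {ι : Type*} {s : Finset ι} {g h : ι → ℝ} {m : ι} {c : ℝ}
    (hle : ∀ i ∈ s, g i ≤ h i) (hm : m ∈ s) (hgap : g m + c ≤ h m) :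
    ∑ i ∈ s, g i + c ≤ ∑ i ∈ s, h i := by
  classical
  rw [← add_sum_erase s g hm, ← add_sum_erase s h hm]
  have hrest : ∑ i ∈ s.erase m, g i ≤ ∑ i ∈ s.erase m, h i :=
    sum_le_sum fun i hi => hle i (mem_of_mem_erase hi)
  linarith

noncomputable def blockMass (μ : ℕ → ℝ) (i : ℕ) : ℝ := ∑ d ∈ Ico (2 ^ i) (2 ^ (i + 1)), μ d

/-- The number of thresholds `2^(i+1)` and `3·2^i` that are at most `a` (the subtraction
truncates at `0` when `a < 2^i`). -/
def blockCount (i a : ℕ) : ℕ := min (a / 2 ^ i) 3 - 1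

noncomputable def potential (μ : ℕ → ℝ) (N a : ℕ) : ℝ :=
  (min a 1 : ℕ) / blockMass μ 0 + ∑ i ∈ range N, (blockCount i a : ℝ) / blockMass μ i

lemma blockMass_zero (μ : ℕ → ℝ) : blockMass μ 0 = μ 1 := by
  simp [blockMass]

lemma blockMass_nonneg {μ : ℕ → ℝ} (hμ : ∀ d, 0 ≤ μ d) (i : ℕ) : 0 ≤ blockMass μ i :=
  sum_nonneg fun d _ => hμ d

lemma blockCount_mono (i : ℕ) : Monotone (blockCount i) := fun _ _ h =>
  tsub_le_tsub_right (min_le_min_right 3 (Nat.div_le_div_right h)) 1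

lemma blockCount_le_two (i a : ℕ) : blockCount i a ≤ 2 := by
  unfold blockCount
  omega

lemma blockCount_eq_zero_of_lt {i a : ℕ} (h : a < 2 ^ (i + 1)) : blockCount i a = 0 := by
  have hdiv : a / 2 ^ i < 2 := (Nat.div_lt_iff_lt_mul (by positivity)).2 (by rwa [pow_succ'] at h)
  unfold blockCount
  omega

lemma blockCount_sub_add_one_le {i a d : ℕ} (ha : 2 ^ (i + 1) ≤ a) (ha' : a < 2 ^ (i + 2))
    (hd : 2 ^ i ≤ d) : blockCount i (a - d) + 1 ≤ blockCount i a := by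
  have hq : 0 < 2 ^ i := by positivity
  have hlow : 2 ≤ a / 2 ^ i := (Nat.le_div_iff_mul_le hq).2 (by rwa [← pow_succ'])
  have hhigh : a / 2 ^ i < 4 :=
    (Nat.div_lt_iff_lt_mul hq).2 (by rwa [show 4 * 2 ^ i = 2 ^ (i + 2) by ring])
  have hdrop : (a - d) / 2 ^ i + 1 ≤ a / 2 ^ i := by
    rw [← Nat.add_div_right _ hq]
    exact Nat.div_le_div_right (by omega)
  unfold blockCount
  omega

lemma potential_zero (μ : ℕ → ℝ) (N : ℕ) : potential μ N 0 = 0 := by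
  simp [potential, blockCount]

lemma potential_mono {μ : ℕ → ℝ} (hμ : ∀ d, 0 ≤ μ d) (N : ℕ) : Monotone (potential μ N) := by
  intro a b hab
  unfold potential
  gcongr with i
  · exact blockMass_nonneg hμ 0
  · exact blockMass_nonneg hμ i
  · exact blockCount_mono i hab

lemma potential_sub_add_le {μ : ℕ → ℝ} (hμ : ∀ d, 0 ≤ μ d) {N a d : ℕ} (ha : 1 ≤ a)
    (haN : Nat.log 2 a ≤ N) (hd : d ∈ Ico (2 ^ (Nat.log 2 a - 1)) (2 ^ (Nat.log 2 a - 1 + 1))) :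
    potential μ N (a - d) + 1 / blockMass μ (Nat.log 2 a - 1) ≤ potential μ N a := by
  obtain rfl | ha2 := ha.eq_or_lt
  · have hd1 : d = 1 := by simpa using hd
    rw [hd1, Nat.sub_self, potential_zero, zero_add, Nat.log_one_right, Nat.zero_sub]
    have hone : potential μ N 1 = 1 / blockMass μ 0 +
        ∑ i ∈ range N, (blockCount i 1 : ℝ) / blockMass μ i := by
      simp [potential]
    rw [hone]
    exact le_add_of_nonneg_right (sum_nonneg fun i _ =>
      div_nonneg (Nat.cast_nonneg _) (blockMass_nonneg hμ i))
  set m := Nat.log 2 a - 1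
  have hlog : Nat.log 2 a = m + 1 := by
    have := Nat.log_pos (b := 2) (by norm_num) ha2
    omega
  have ha_ge : 2 ^ (m + 1) ≤ a := hlog ▸ Nat.pow_log_le_self 2 (by omega)
  have ha_lt : a < 2 ^ (m + 2) := by
    have := Nat.lt_pow_succ_log_self (b := 2) (by norm_num) a
    rwa [hlog] at this
  have hjump : (blockCount m (a - d) : ℝ) / blockMass μ m + 1 / blockMass μ m ≤
      (blockCount m a : ℝ) / blockMass μ m := by
    rw [← add_div]
    gcongr
    · exact blockMass_nonneg hμ m
    · exact_mod_cast blockCount_sub_add_one_le ha_ge ha_lt (mem_Ico.1 hd).1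
  have hsum : ∑ i ∈ range N, (blockCount i (a - d) : ℝ) / blockMass μ i + 1 / blockMass μ m ≤
      ∑ i ∈ range N, (blockCount i a : ℝ) / blockMass μ i :=
    sum_add_le_sum_of_le_of_add_le (fun i _ => by
        gcongr
        · exact blockMass_nonneg hμ i
        · exact blockCount_mono i (Nat.sub_le a d))
      (mem_range.2 (by omega : m < N)) hjump
  have hmin : ((min (a - d) 1 : ℕ) : ℝ) ≤ (min a 1 : ℕ) := by
    exact_mod_cast min_le_min_right 1 (Nat.sub_le a d)
  unfold potential
  have := div_le_div_of_nonneg_right hmin (blockMass_nonneg hμ 0)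
  linarith

lemma potential_le {μ : ℕ → ℝ} (hμ : ∀ d, 0 ≤ μ d) {N a : ℕ} (haN : Nat.log 2 a ≤ N) :
    potential μ N a ≤ 3 / μ 1 + ∑ i ∈ Ico 1 (Nat.log 2 a), 2 / blockMass μ i := by
  have hblocks : ∑ i ∈ range N, (blockCount i a : ℝ) / blockMass μ i ≤
      ∑ i ∈ range (Nat.log 2 a), 2 / blockMass μ i := by
    have htail : ∑ i ∈ Ico (Nat.log 2 a) N, (blockCount i a : ℝ) / blockMass μ i = 0 :=
      sum_eq_zero fun i hi => by
        rw [blockCount_eq_zero_of_lt ((Nat.lt_pow_succ_log_self (by norm_num) a).trans_le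
          (Nat.pow_le_pow_right (by norm_num) (by simp at hi; omega)))]
        simp
    rw [← sum_range_add_sum_Ico _ haN, htail, add_zero]
    gcongr with i
    · exact blockMass_nonneg hμ i
    · exact_mod_cast blockCount_le_two i a
  have hmin : ((min a 1 : ℕ) : ℝ) / blockMass μ 0 ≤ 1 / μ 1 := by
    rw [blockMass_zero]
    gcongr
    · exact hμ 1
    · exact_mod_cast min_le_right a 1
  have hthird : 1 / μ 1 ≤ 3 / μ 1 := by
    gcongr
    · exact hμ 1
    · norm_num
  unfold potential
  obtain hlog | hlog := Nat.eq_zero_or_pos (Nat.log 2 a)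
  · simp only [hlog, range_zero, sum_empty, show Ico 1 0 = ∅ from rfl] at hblocks ⊢
    linarith
  · rw [sum_range_eq_add_Ico _ hlog, blockMass_zero] at hblocks
    linarith [show 1 / μ 1 + 2 / μ 1 = 3 / μ 1 by ring]

lemma lowerBlock_subset_Icc {a : ℕ} (ha : 1 ≤ a) :
    Ico (2 ^ (Nat.log 2 a - 1)) (2 ^ (Nat.log 2 a - 1 + 1)) ⊆ Icc 1 a := by
  intro d hd
  have hd := mem_Ico.1 hd
  have h1 : 1 ≤ 2 ^ (Nat.log 2 a - 1) := Nat.one_le_two_pow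
  obtain rfl | ha2 := ha.eq_or_lt
  · simp at hd ⊢; omega
  have hpow : 2 ^ (Nat.log 2 a - 1 + 1) ≤ a := by
    rw [Nat.sub_add_cancel (Nat.log_pos (by norm_num) ha2)]
    exact Nat.pow_log_le_self 2 (by omega)
  exact mem_Icc.2 ⟨by omega, by omega⟩

lemma isSupersolution_potential {μ : ℕ → ℝ} (hμ : ∀ d, 0 ≤ μ d) {n : ℕ} (hn : 2 ≤ n)
    (hp : ∀ i < Nat.log 2 n, 0 < blockMass μ i) :
    IsSupersolution μ n (potential μ (Nat.log 2 n)) := by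
  intro a ha
  obtain ⟨ha1, han⟩ := mem_Icc.1 ha
  have hlog : Nat.log 2 a ≤ Nat.log 2 n := Nat.log_mono_right han
  have hN : 0 < Nat.log 2 n := Nat.log_pos (by norm_num) hn
  exact supersolution_ineq_of_drop hμ (potential_mono hμ _) (lowerBlock_subset_Icc ha1)
    (hp _ (by omega)) fun d hd => potential_sub_add_le hμ ha1 hlog hd

theorem stmt5_general (n : ℕ) (hn : 2 ≤ n) (μ : ℕ → ℝ)
    (hμ0 : ∀ d, 0 ≤ μ d)
    (hp : ∀ i < Nat.log 2 n, 0 < ∑ d ∈ Finset.Ico (2 ^ i) (2 ^ (i + 1)), μ d)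
    (T : ℕ → ℝ) (hT0 : T 0 = 0)
    (hTrec : ∀ a ∈ Finset.Icc 1 n,
      (∑ d ∈ Finset.Icc 1 a, μ d) * T a = 1 + ∑ d ∈ Finset.Icc 1 a, μ d * T (a - d)) :
    ∀ a ∈ Finset.Icc 1 n,
      T a ≤ 3 / μ 1 +
        ∑ i ∈ Finset.Ico 1 (Nat.log 2 a), 2 / ∑ d ∈ Finset.Ico (2 ^ i) (2 ^ (i + 1)), μ d := by
  have hμ1 : 0 < μ 1 := blockMass_zero μ ▸ hp 0 (Nat.log_pos (by norm_num) hn)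
  intro a ha
  obtain ⟨-, han⟩ := mem_Icc.1 ha
  calc T a ≤ potential μ (Nat.log 2 n) a :=
        le_of_supersolution hμ0 hμ1 hT0 (potential_zero μ _).ge hTrec
          (isSupersolution_potential hμ0 hn hp) a han
    _ ≤ _ := potential_le hμ0 (Nat.log_mono_right han)

/-- Upper bound on expected hitting times in terms of dyadic block probabilities
`p i = μ([2^i, 2^{i+1}))`: if `p i > 0` for all `i < L = ⌊log₂ n⌋`, then for every
starting state `a ∈ [1,n]` with `a ∈ I_j` (i.e. `j = ⌊log₂ a⌋`),
`T a ≤ 2/p_{j-1} + ... + 2/p_1 + 3/p_0`. Here `T` is the vector of expected hitting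
times of `0`, characterized by `T 0 = 0` and the one-step recurrence. -/
theorem stmt5 (n : ℕ) (hn : 2 ≤ n) (μ : ℕ → ℝ)
    (hμ0 : ∀ d, 0 ≤ μ d)
    (hsupp : ∀ d, d ∉ Finset.Icc 1 n → μ d = 0)
    (hsum : ∑ d ∈ Finset.Icc 1 n, μ d = 1)
    (hp : ∀ i < Nat.log 2 n, 0 < ∑ d ∈ Finset.Ico (2 ^ i) (2 ^ (i + 1)), μ d)
    (T : ℕ → ℝ) (hT0 : T 0 = 0)
    (hTrec : ∀ a ∈ Finset.Icc 1 n,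
      (∑ d ∈ Finset.Icc 1 a, μ d) * T a = 1 + ∑ d ∈ Finset.Icc 1 a, μ d * T (a - d)) :
    ∀ a ∈ Finset.Icc 1 n,
      T a ≤ 3 / μ 1 +
        ∑ i ∈ Finset.Ico 1 (Nat.log 2 a), 2 / ∑ d ∈ Finset.Ico (2 ^ i) (2 ^ (i + 1)), μ d :=
  stmt5_general n hn μ hμ0 hp T hT0 hTrec
end

section
/- For the harmonic distribution μ_har(d) = 1/(d·H_n) on {1,...,n}, where H_n is the n-th harmonic number, the token process started uniformly on {1,...,n} satisfies E(T) = O((log n)²). -/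
/-- The harmonic distribution `μ_har(d) = 1/(d·H_n)` on `{1,...,n}`. -/
noncomputable def muHar (n d : ℕ) : ℝ :=
  if d ∈ Finset.Icc 1 n then 1 / ((d : ℝ) * ∑ k ∈ Finset.Icc 1 n, (1 : ℝ) / k) else 0

/-- Partial harmonic sums. -/
noncomputable def hsum (a : ℕ) : ℝ := ∑ k ∈ Finset.Icc 1 a, (1:ℝ)/k

lemma hsum_zero : hsum 0 = 0 := by simp [hsum]

lemma hsum_succ (a : ℕ) : hsum (a+1) = hsum a + 1/((a:ℝ)+1) := by
  rw [hsum, hsum, Finset.sum_Icc_succ_top (by omega)]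
  push_cast
  ring

lemma hsum_nonneg (a : ℕ) : 0 ≤ hsum a :=
  Finset.sum_nonneg fun k _ => by positivity

lemma one_le_hsum {a : ℕ} (ha : 1 ≤ a) : 1 ≤ hsum a := by
  have h1 : (1:ℕ) ∈ Finset.Icc 1 a := by simp [ha]
  have := Finset.single_le_sum (f := fun k : ℕ => (1:ℝ)/k)
    (fun k _ => by positivity) h1
  simpa [hsum] using this

lemma hsum_mono {a b : ℕ} (h : a ≤ b) : hsum a ≤ hsum b :=
  Finset.sum_le_sum_of_subset_of_nonneg
    (Finset.Icc_subset_Icc_right h) (fun k _ _ => by positivity)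

lemma refl_sum (a : ℕ) :
    ∑ d ∈ Finset.Icc 1 a, (1:ℝ)/((a:ℝ)+1-d) = hsum a := by
  rw [hsum]
  apply Finset.sum_nbij' (fun d => a+1-d) (fun k => a+1-k)
  · intro d hd; simp only [Finset.mem_Icc] at *; omega
  · intro d hd; simp only [Finset.mem_Icc] at *; omega
  · intro d hd; simp only [Finset.mem_Icc] at hd; omega
  · intro d hd; simp only [Finset.mem_Icc] at hd; omega
  · intro d hd; simp only [Finset.mem_Icc] at hd
    rw [Nat.cast_sub (by omega)]
    push_cast
    ring_nf

lemma key : ∀ a : ℕ, 1 ≤ a →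
    ∑ d ∈ Finset.Icc 1 a, hsum (a-d) / d ≤ hsum a ^ 2 - 1 := by
  intro a ha
  induction a, ha using Nat.le_induction with
  | base => norm_num [hsum_zero, hsum]
  | succ a ha ih =>
    have hterm : ∀ d ∈ Finset.Icc 1 a, hsum (a+1-d)/(d:ℝ)
        = hsum (a-d)/d + (1/((a:ℝ)+1)) * (1/d + 1/((a:ℝ)+1-d)) := by
      intro d hd; simp only [Finset.mem_Icc] at hd
      have h1 : a+1-d = (a-d)+1 := by omega
      have h2 : ((a-d:ℕ):ℝ) = (a:ℝ)-(d:ℝ) := by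
        rw [Nat.cast_sub hd.2]
      have hd0 : (0:ℝ) < d := by exact_mod_cast hd.1
      have hda : (d:ℝ) ≤ a := by exact_mod_cast hd.2
      rw [h1, hsum_succ, h2]
      have hne1 : (a:ℝ) - d + 1 ≠ 0 := by linarith
      have hne2 : (a:ℝ) + 1 - d ≠ 0 := by intro h; apply hne1; linarith
      have hne3 : (a:ℝ) + 1 ≠ 0 := by positivity
      field_simp
      ring
    have e : ∑ d ∈ Finset.Icc 1 (a+1), hsum (a+1-d)/(d:ℝ)
        = (∑ d ∈ Finset.Icc 1 a, hsum (a-d)/d)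
          + (1/((a:ℝ)+1)) * (hsum a + hsum a) := by
      rw [Finset.sum_Icc_succ_top (by omega)]
      rw [Finset.sum_congr rfl hterm]
      rw [Finset.sum_add_distrib, ← Finset.mul_sum, Finset.sum_add_distrib, refl_sum]
      have : (∑ d ∈ Finset.Icc 1 a, (1:ℝ)/d) = hsum a := rfl
      rw [this]
      simp [hsum_zero]
    rw [e, hsum_succ]
    have hpos : (0:ℝ) < (a:ℝ)+1 := by positivity
    nlinarith [ih, hsum_nonneg a, sq_nonneg (1/((a:ℝ)+1)), mul_pos hpos hpos]

lemma hsum_eq_harmonic (n : ℕ) : hsum n = (harmonic n : ℝ) := by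
  induction n with
  | zero => simp [hsum_zero]
  | succ k ih =>
    rw [hsum_succ, harmonic_succ, ih]
    push_cast
    ring

/-- For `μ = μ_har`, the token process started uniformly on `[1,n]` satisfies
`E(T) = O((log n)²)`. `T` is characterized by `T 0 = 0` and the hitting-time recurrence. -/
theorem stmt7 : ∃ C > 0, ∀ n : ℕ, 2 ≤ n → ∀ T : ℕ → ℝ, T 0 = 0 →
    (∀ a ∈ Finset.Icc 1 n,
      (∑ d ∈ Finset.Icc 1 a, muHar n d) * T a =
        1 + ∑ d ∈ Finset.Icc 1 a, muHar n d * T (a - d)) →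
    (1 / (n : ℝ)) * ∑ a ∈ Finset.Icc 1 n, T a ≤ C * Real.log n ^ 2 := by
  refine ⟨9, by norm_num, ?_⟩
  intro n hn T hT0 hrec
  have hn1 : 1 ≤ n := by omega
  have hHpos : (0:ℝ) < hsum n := lt_of_lt_of_le one_pos (one_le_hsum hn1)
  have hne : hsum n ≠ 0 := ne_of_gt hHpos
  -- main bound T a ≤ H_n * H_a by strong induction
  have Tb : ∀ a, a ≤ n → T a ≤ hsum n * hsum a := by
    intro a
    induction a using Nat.strong_induction_on with
    | _ a ih =>
      intro han
      rcases Nat.eq_zero_or_pos a with h0 | h1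
      · simp [h0, hT0, hsum_zero]
      · have hmem : a ∈ Finset.Icc 1 n := Finset.mem_Icc.mpr ⟨h1, han⟩
        have hrec' := hrec a hmem
        have hmu : ∀ d ∈ Finset.Icc 1 a, muHar n d = 1/((d:ℝ) * hsum n) := by
          intro d hd; simp only [Finset.mem_Icc] at hd
          have hdn : d ∈ Finset.Icc 1 n := Finset.mem_Icc.mpr ⟨hd.1, le_trans hd.2 han⟩
          rw [muHar, if_pos hdn]; rfl
        have e1 : ∑ d ∈ Finset.Icc 1 a, muHar n d = hsum a / hsum n := by
          rw [Finset.sum_congr rfl hmu]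
          simp only [hsum, Finset.sum_div]
          exact Finset.sum_congr rfl fun d _ => (div_div 1 (d:ℝ) _).symm
        have e2 : ∑ d ∈ Finset.Icc 1 a, muHar n d * T (a-d)
            = (∑ d ∈ Finset.Icc 1 a, T (a-d) / d) / hsum n := by
          rw [Finset.sum_div]
          refine Finset.sum_congr rfl fun d hd => ?_
          rw [hmu d hd]
          simp only [Finset.mem_Icc] at hd
          have hd0 : (d:ℝ) ≠ 0 := Nat.cast_ne_zero.mpr (by omega)
          rw [div_div, one_div, inv_mul_eq_div]
        rw [e1, e2] at hrec'
        have e3 : hsum a * T a = hsum n + ∑ d ∈ Finset.Icc 1 a, T (a-d)/d := by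
          field_simp at hrec'
          linarith [hrec']
        have hSb : ∑ d ∈ Finset.Icc 1 a, T (a-d)/d ≤ hsum n * (hsum a ^2 - 1) := by
          calc ∑ d ∈ Finset.Icc 1 a, T (a-d)/d
              ≤ ∑ d ∈ Finset.Icc 1 a, hsum n * hsum (a-d) / d := by
                apply Finset.sum_le_sum
                intro d hd; simp only [Finset.mem_Icc] at hd
                have hd0 : (0:ℝ) < d := by exact_mod_cast hd.1
                gcongr
                exact ih (a-d) (by omega) (by omega)
            _ = hsum n * ∑ d ∈ Finset.Icc 1 a, hsum (a-d)/d := by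
                rw [Finset.mul_sum]
                exact Finset.sum_congr rfl fun d _ => (mul_div_assoc _ _ _)
            _ ≤ hsum n * (hsum a^2 - 1) :=
                mul_le_mul_of_nonneg_left (key a h1) hHpos.le
        have hha : (0:ℝ) < hsum a := lt_of_lt_of_le one_pos (one_le_hsum h1)
        have hfin : hsum a * T a ≤ hsum a * (hsum n * hsum a) := by
          rw [e3]; nlinarith [hSb]
        exact le_of_mul_le_mul_left hfin hha
  have hsumT : ∑ a ∈ Finset.Icc 1 n, T a ≤ (n:ℝ) * (hsum n * hsum n) := by
    calc ∑ a ∈ Finset.Icc 1 n, T a ≤ ∑ _a ∈ Finset.Icc 1 n, hsum n * hsum n := by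
          apply Finset.sum_le_sum
          intro a ha; simp only [Finset.mem_Icc] at ha
          exact le_trans (Tb a ha.2)
            (mul_le_mul_of_nonneg_left (hsum_mono ha.2) hHpos.le)
      _ = (n:ℝ) * (hsum n * hsum n) := by
          rw [Finset.sum_const, Nat.card_Icc]
          simp [nsmul_eq_mul]
  have hl2 : (0.6931471803:ℝ) < Real.log 2 := Real.log_two_gt_d9
  have hln : Real.log 2 ≤ Real.log n := by
    apply Real.log_le_log (by norm_num)
    exact_mod_cast hn
  have hlogpos : (0:ℝ) < Real.log n := by linarith
  have hharm : hsum n ≤ 1 + Real.log n := by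
    rw [hsum_eq_harmonic]; exact harmonic_le_one_add_log n
  have hlog : hsum n ≤ 3 * Real.log n := by linarith
  have hnpos : (0:ℝ) < n := by exact_mod_cast hn1
  calc (1 / (n : ℝ)) * ∑ a ∈ Finset.Icc 1 n, T a
      ≤ (1 / (n:ℝ)) * ((n:ℝ) * (hsum n * hsum n)) := by
        apply mul_le_mul_of_nonneg_left hsumT (by positivity)
    _ = hsum n * hsum n := by field_simp
    _ ≤ (3 * Real.log n) * (3 * Real.log n) :=
        mul_le_mul hlog hlog (hsum_nonneg n) (by positivity)
    _ = 9 * Real.log n ^ 2 := by ring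
end

section
/- With σ_a = Σ_{1≤d≤a} μ(d)·√(d/a) + Σ_{a<d≤n} μ(d)·√(a/d) and φ_a = 1/(a·σ_a), the potential Φ(n) = Σ_{1≤a≤n} φ_a satisfies Φ(n) = Ω((log n)²) for every probability distribution μ on {1,...,n} with μ(1) > 0. -/
/-- `σ_a = Σ_{1≤d≤a} μ(d)·√(d/a) + Σ_{a<d≤n} μ(d)·√(a/d)`. -/
noncomputable def sigma (n : ℕ) (μ : ℕ → ℝ) (a : ℕ) : ℝ :=
  ∑ d ∈ Finset.Icc 1 a, μ d * Real.sqrt ((d : ℝ) / a) +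
    ∑ d ∈ Finset.Ioc a n, μ d * Real.sqrt ((a : ℝ) / d)

/-- The potential `Φ(s) = Σ_{1≤a≤s} 1/(a·σ_a)`. -/
noncomputable def Phi (n : ℕ) (μ : ℕ → ℝ) (s : ℕ) : ℝ :=
  ∑ a ∈ Finset.Icc 1 s, 1 / ((a : ℝ) * sigma n μ a)

section Aux


-- telescoping: ∑_{a=1}^m 1/√a ≤ 2√m
lemma lemA (m : ℕ) : ∑ a ∈ Finset.Icc 1 m, 1 / Real.sqrt a ≤ 2 * Real.sqrt m := by
  induction m with
  | zero => simp
  | succ m ih =>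
    rw [show Finset.Icc 1 (m+1) = insert (m+1) (Finset.Icc 1 m) by
      ext x; simp [Finset.mem_Icc]; omega]
    rw [Finset.sum_insert (by simp)]
    have h1 : Real.sqrt m ^ 2 = m := Real.sq_sqrt (by positivity)
    have h2 : Real.sqrt (m+1 : ℕ) ^ 2 = (m+1 : ℕ) := Real.sq_sqrt (by positivity)
    have h3 : (0:ℝ) < Real.sqrt (m+1 : ℕ) := Real.sqrt_pos.2 (by positivity)
    have h4 : (0:ℝ) ≤ Real.sqrt m := Real.sqrt_nonneg _
    have key : 1 / Real.sqrt (m+1 : ℕ) ≤ 2 * Real.sqrt (m+1 : ℕ) - 2 * Real.sqrt m := by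
      rw [div_le_iff₀ h3]
      push_cast at h2 ⊢
      nlinarith [h1, h2, h3, h4]
    linarith

lemma lemB (d : ℕ) (hd : 1 ≤ d) : ∀ n, d ≤ n →
    ∑ a ∈ Finset.Icc (d+1) n, 1 / ((a:ℝ) * Real.sqrt a) ≤ 2 / Real.sqrt d - 2 / Real.sqrt n := by
  intro n
  induction n with
  | zero => omega
  | succ n ih =>
    intro hdn
    rcases Nat.lt_or_ge d (n+1) with h | h
    · have hdn' : d ≤ n := by omega
      rw [show Finset.Icc (d+1) (n+1) = insert (n+1) (Finset.Icc (d+1) n) by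
        ext x; simp [Finset.mem_Icc]; omega]
      rw [Finset.sum_insert (by simp)]
      have h1 : Real.sqrt n ^ 2 = n := Real.sq_sqrt (by positivity)
      have h2 : Real.sqrt ((n:ℝ)+1) ^ 2 = (n:ℝ)+1 := Real.sq_sqrt (by positivity)
      have h3 : (0:ℝ) < Real.sqrt ((n:ℝ)+1) := Real.sqrt_pos.2 (by positivity)
      have h4 : (0:ℝ) < Real.sqrt n := Real.sqrt_pos.2 (by exact_mod_cast by omega)
      have key : 1 / (((n:ℝ)+1) * Real.sqrt ((n:ℝ)+1)) ≤ 2 / Real.sqrt n - 2 / Real.sqrt ((n:ℝ)+1) := by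
        set x := Real.sqrt n with hx
        set y := Real.sqrt ((n:ℝ)+1) with hy
        have hxy : (y - x) * (y + x) = 1 := by nlinarith [h1, h2]
        have hxley : x ≤ y := by nlinarith [h1, h2, h3, h4]
        rw [div_sub_div _ _ (ne_of_gt h4) (ne_of_gt h3), div_le_div_iff₀ (by positivity) (by positivity)]
        have h5 : (y - x) * (y + x) * (y * y) = y * y := by rw [hxy]; ring
        nlinarith [hxy, hxley, h1, h2, h3, h4, mul_pos h3 h4, h5,
          mul_le_mul_of_nonneg_right hxley (le_of_lt (mul_pos h3 h3))]
      have := ih hdn'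
      push_cast
      push_cast at key this
      linarith
    · have : d = n + 1 := by omega
      subst this
      simp

lemma lemC (d n : ℕ) (hd : 1 ≤ d) (hdn : d ≤ n) :
    ∑ a ∈ Finset.Icc d n, Real.sqrt ((d:ℝ)/a) / a
      + ∑ a ∈ Finset.Ico 1 d, Real.sqrt ((a:ℝ)/d) / a ≤ 5 := by
  have hd0 : (0:ℝ) < Real.sqrt d := Real.sqrt_pos.2 (by exact_mod_cast hd)
  have hb1 : ∑ a ∈ Finset.Icc d n, Real.sqrt ((d:ℝ)/a) / a ≤ 3 := by
    have heq : ∑ a ∈ Finset.Icc d n, Real.sqrt ((d:ℝ)/a) / a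
        = Real.sqrt d * ∑ a ∈ Finset.Icc d n, 1 / ((a:ℝ) * Real.sqrt a) := by
      rw [Finset.mul_sum]
      refine Finset.sum_congr rfl fun a ha => ?_
      simp only [Finset.mem_Icc] at ha
      have ha1 : (1:ℕ) ≤ a := le_trans hd ha.1
      have ha0 : (0:ℝ) < Real.sqrt a := Real.sqrt_pos.2 (by exact_mod_cast ha1)
      have haa : (0:ℝ) < (a:ℝ) := by exact_mod_cast ha1
      rw [Real.sqrt_div (by positivity), mul_one_div, div_div, mul_comm (Real.sqrt a) ((a:ℝ))]
    rw [heq, show Finset.Icc d n = insert d (Finset.Icc (d+1) n) by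
      ext x; simp [Finset.mem_Icc]; omega]
    rw [Finset.sum_insert (by simp)]
    have hB := lemB d hd n hdn
    have hn0 : (0:ℝ) < Real.sqrt n := Real.sqrt_pos.2 (by exact_mod_cast (le_trans hd hdn))
    have hdd : (0:ℝ) < (d:ℝ) := by exact_mod_cast hd
    have h1 : Real.sqrt (d:ℝ) * (1 / ((d:ℝ) * Real.sqrt d)) = 1 / d := by
      field_simp
    have h2 : (1:ℝ)/d ≤ 1 := by
      rw [div_le_one hdd]; exact_mod_cast hd
    calc Real.sqrt d * (1 / ((d:ℝ) * Real.sqrt d) + ∑ a ∈ Finset.Icc (d+1) n, 1 / ((a:ℝ) * Real.sqrt a))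
        ≤ Real.sqrt d * (1 / ((d:ℝ) * Real.sqrt d) + 2 / Real.sqrt d) := by
          have : (2:ℝ) / Real.sqrt d - 2 / Real.sqrt n ≤ 2 / Real.sqrt d := by
            have : (0:ℝ) ≤ 2 / Real.sqrt n := by positivity
            linarith
          nlinarith [hB, hd0]
      _ = 1/d + 2 := by field_simp
      _ ≤ 3 := by linarith
  have hb2 : ∑ a ∈ Finset.Ico 1 d, Real.sqrt ((a:ℝ)/d) / a ≤ 2 := by
    have heq : ∑ a ∈ Finset.Ico 1 d, Real.sqrt ((a:ℝ)/d) / a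
        = (1 / Real.sqrt d) * ∑ a ∈ Finset.Ico 1 d, 1 / Real.sqrt a := by
      rw [Finset.mul_sum]
      refine Finset.sum_congr rfl fun a ha => ?_
      simp only [Finset.mem_Ico] at ha
      have ha0 : (0:ℝ) < Real.sqrt a := Real.sqrt_pos.2 (by exact_mod_cast ha.1)
      have haa : (0:ℝ) < (a:ℝ) := by exact_mod_cast ha.1
      have hsq : Real.sqrt a * Real.sqrt a = (a:ℝ) := Real.mul_self_sqrt (by positivity)
      rw [Real.sqrt_div (by positivity)]
      field_simp
      nlinarith [hsq]
    rw [heq, show Finset.Ico 1 d = Finset.Icc 1 (d-1) by ext x; simp [Finset.mem_Icc]; omega]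
    have hA := lemA (d-1)
    have hmono : Real.sqrt ((d-1:ℕ):ℝ) ≤ Real.sqrt d := by
      apply Real.sqrt_le_sqrt; exact_mod_cast Nat.sub_le d 1
    calc (1 / Real.sqrt d) * ∑ a ∈ Finset.Icc 1 (d-1), 1 / Real.sqrt a
        ≤ (1 / Real.sqrt d) * (2 * Real.sqrt d) := by
          apply mul_le_mul_of_nonneg_left _ (by positivity)
          exact le_trans hA (by linarith)
      _ = 2 := by field_simp
  linarith


/-- The double-counting bound: `∑_{a=1}^n σ_a/a ≤ 5`. -/
lemma lemT (n : ℕ) (hn : 1 ≤ n) (μ : ℕ → ℝ) (hμ0 : ∀ d, 0 ≤ μ d)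
    (hsum : ∑ d ∈ Finset.Icc 1 n, μ d = 1) :
    ∑ a ∈ Finset.Icc 1 n, sigma n μ a / a ≤ 5 := by
  have hswap : ∑ a ∈ Finset.Icc 1 n, sigma n μ a / a
      = ∑ d ∈ Finset.Icc 1 n, μ d *
          (∑ a ∈ Finset.Icc d n, Real.sqrt ((d:ℝ)/a) / a
            + ∑ a ∈ Finset.Ico 1 d, Real.sqrt ((a:ℝ)/d) / a) := by
    have e1 : ∑ a ∈ Finset.Icc 1 n, (∑ d ∈ Finset.Icc 1 a, μ d * (Real.sqrt ((d:ℝ)/a) / a))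
        = ∑ d ∈ Finset.Icc 1 n, ∑ a ∈ Finset.Icc d n, μ d * (Real.sqrt ((d:ℝ)/a) / a) := by
      apply Finset.sum_comm'
      intro a d; simp only [Finset.mem_Icc]; omega
    have e2 : ∑ a ∈ Finset.Icc 1 n, (∑ d ∈ Finset.Ioc a n, μ d * (Real.sqrt ((a:ℝ)/d) / a))
        = ∑ d ∈ Finset.Icc 1 n, ∑ a ∈ Finset.Ico 1 d, μ d * (Real.sqrt ((a:ℝ)/d) / a) := by
      apply Finset.sum_comm'
      intro a d; simp only [Finset.mem_Icc, Finset.mem_Ioc, Finset.mem_Ico]; omega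
    calc ∑ a ∈ Finset.Icc 1 n, sigma n μ a / a
        = ∑ a ∈ Finset.Icc 1 n, ((∑ d ∈ Finset.Icc 1 a, μ d * (Real.sqrt ((d:ℝ)/a) / a))
            + ∑ d ∈ Finset.Ioc a n, μ d * (Real.sqrt ((a:ℝ)/d) / a)) := by
          refine Finset.sum_congr rfl fun a _ => ?_
          rw [sigma, add_div, Finset.sum_div, Finset.sum_div]
          congr 1 <;> exact Finset.sum_congr rfl fun d _ => by ring
      _ = ∑ d ∈ Finset.Icc 1 n, ∑ a ∈ Finset.Icc d n, μ d * (Real.sqrt ((d:ℝ)/a) / a)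
            + ∑ d ∈ Finset.Icc 1 n, ∑ a ∈ Finset.Ico 1 d, μ d * (Real.sqrt ((a:ℝ)/d) / a) := by
          rw [Finset.sum_add_distrib, e1, e2]
      _ = _ := by
          rw [← Finset.sum_add_distrib]
          refine Finset.sum_congr rfl fun d _ => ?_
          rw [← Finset.mul_sum, ← Finset.mul_sum, mul_add]
  rw [hswap]
  calc ∑ d ∈ Finset.Icc 1 n, μ d *
          (∑ a ∈ Finset.Icc d n, Real.sqrt ((d:ℝ)/a) / a
            + ∑ a ∈ Finset.Ico 1 d, Real.sqrt ((a:ℝ)/d) / a)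
      ≤ ∑ d ∈ Finset.Icc 1 n, μ d * 5 := by
        refine Finset.sum_le_sum fun d hd => ?_
        simp only [Finset.mem_Icc] at hd
        exact mul_le_mul_of_nonneg_left (lemC d n hd.1 hd.2) (hμ0 d)
    _ = 5 := by rw [← Finset.sum_mul, hsum, one_mul]

end Aux

/-- The initial potential is `Ω((log n)²)`: there is an absolute constant `c > 0` such that
for every `n ≥ 2` and every probability distribution `μ` on `[1,n]` with `μ(1) > 0`,
`Φ(n) ≥ c·(log n)²`. -/
theorem stmt11 : ∃ c > 0, ∀ n : ℕ, 2 ≤ n → ∀ μ : ℕ → ℝ,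
    (∀ d, 0 ≤ μ d) → (∀ d, d ∉ Finset.Icc 1 n → μ d = 0) →
    (∑ d ∈ Finset.Icc 1 n, μ d = 1) → 0 < μ 1 →
    c * Real.log n ^ 2 ≤ Phi n μ n := by
  refine ⟨1/5, by norm_num, fun n hn μ hμ0 hμsupp hμsum hμ1 => ?_⟩
  have hn1 : 1 ≤ n := by omega
  -- σ_a > 0 for a ∈ [1, n]
  have hσ : ∀ a ∈ Finset.Icc 1 n, 0 < sigma n μ a := by
    intro a ha
    simp only [Finset.mem_Icc] at ha
    have ha0 : (0:ℝ) < (a:ℝ) := by exact_mod_cast ha.1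
    have h1 : (0:ℝ) < μ 1 * Real.sqrt ((1:ℕ) / (a:ℝ)) := by
      apply mul_pos hμ1
      apply Real.sqrt_pos.2
      push_cast
      positivity
    have hle : μ 1 * Real.sqrt (((1:ℕ):ℝ) / a) ≤ ∑ d ∈ Finset.Icc 1 a, μ d * Real.sqrt ((d : ℝ) / a) := by
      apply Finset.single_le_sum (f := fun d => μ d * Real.sqrt ((d : ℝ) / a))
      · intro d _; exact mul_nonneg (hμ0 d) (Real.sqrt_nonneg _)
      · simp [Finset.mem_Icc]; omega
    have h2 : (0:ℝ) ≤ ∑ d ∈ Finset.Ioc a n, μ d * Real.sqrt ((a : ℝ) / d) :=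
      Finset.sum_nonneg fun d _ => mul_nonneg (hμ0 d) (Real.sqrt_nonneg _)
    have := h1.trans_le hle
    push_cast at this ⊢
    rw [sigma]
    push_cast
    linarith
  -- Cauchy-Schwarz
  set H : ℝ := ∑ a ∈ Finset.Icc 1 n, 1 / (a:ℝ) with hH
  have hCS : H ^ 2 ≤ Phi n μ n * ∑ a ∈ Finset.Icc 1 n, sigma n μ a / a := by
    have := Finset.sum_mul_sq_le_sq_mul_sq (Finset.Icc 1 n)
      (fun a => Real.sqrt (1 / ((a:ℝ) * sigma n μ a)))
      (fun a => Real.sqrt (sigma n μ a / a))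
    have hfg : ∑ a ∈ Finset.Icc 1 n,
        Real.sqrt (1 / ((a:ℝ) * sigma n μ a)) * Real.sqrt (sigma n μ a / a) = H := by
      refine Finset.sum_congr rfl fun a ha => ?_
      have hs := hσ a ha
      simp only [Finset.mem_Icc] at ha
      have ha0 : (0:ℝ) < (a:ℝ) := by exact_mod_cast ha.1
      rw [← Real.sqrt_mul (by positivity)]
      rw [show 1 / ((a:ℝ) * sigma n μ a) * (sigma n μ a / a) = (1/(a:ℝ)) * (1/(a:ℝ)) by
        field_simp]
      exact Real.sqrt_mul_self (by positivity)
    have hf2 : ∑ a ∈ Finset.Icc 1 n,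
        Real.sqrt (1 / ((a:ℝ) * sigma n μ a)) ^ 2 = Phi n μ n := by
      refine Finset.sum_congr rfl fun a ha => ?_
      have hs := hσ a ha
      simp only [Finset.mem_Icc] at ha
      have ha0 : (0:ℝ) < (a:ℝ) := by exact_mod_cast ha.1
      exact Real.sq_sqrt (by positivity)
    have hg2 : ∑ a ∈ Finset.Icc 1 n,
        Real.sqrt (sigma n μ a / a) ^ 2 = ∑ a ∈ Finset.Icc 1 n, sigma n μ a / a := by
      refine Finset.sum_congr rfl fun a ha => ?_
      have hs := hσ a ha
      simp only [Finset.mem_Icc] at ha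
      have ha0 : (0:ℝ) < (a:ℝ) := by exact_mod_cast ha.1
      exact Real.sq_sqrt (by positivity)
    rw [hfg, hf2, hg2] at this
    exact this
  have hT := lemT n hn1 μ hμ0 hμsum
  have hΦ : 0 ≤ Phi n μ n := by
    rw [Phi]
    apply Finset.sum_nonneg
    intro a ha
    have hs := hσ a ha
    simp only [Finset.mem_Icc] at ha
    have ha0 : (0:ℝ) < (a:ℝ) := by exact_mod_cast ha.1
    positivity
  have hH2 : H ^ 2 ≤ 5 * Phi n μ n := by
    calc H ^ 2 ≤ Phi n μ n * ∑ a ∈ Finset.Icc 1 n, sigma n μ a / a := hCS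
      _ ≤ Phi n μ n * 5 := mul_le_mul_of_nonneg_left hT hΦ
      _ = 5 * Phi n μ n := by ring
  -- H ≥ log n
  have hlogH : Real.log n ≤ H := by
    have h1 : Real.log n ≤ Real.log (n+1) := by
      apply Real.log_le_log (by exact_mod_cast hn1)
      push_cast; linarith
    have h2 := log_add_one_le_harmonic n
    have h3 : ((harmonic n : ℚ) : ℝ) = H := by
      rw [harmonic_eq_sum_Icc]
      push_cast
      refine Finset.sum_congr rfl fun a _ => ?_
      rw [one_div]
    push_cast at h2
    rw [h3] at h2
    push_cast
    linarith
  have hlog0 : 0 ≤ Real.log n := Real.log_nonneg (by exact_mod_cast hn1)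
  have : Real.log n ^ 2 ≤ H ^ 2 := by nlinarith
  nlinarith
end

section
/- For every a ∈ {1,...,n}, σ_a ≤ 2c · Σ_{0≤j≤L} p_j · c^{|j − i(a)|}, where c = 1/√2, i(a) = ⌊log₂ a⌋, L = ⌊log₂ n⌋, and p_j is the μ-mass of the dyadic interval I_j. -/
/-!
Group the points `d` by the dyadic block `I_j = {d : ⌊log₂ d⌋ = j}` containing them. Taking
floors moves each logarithm by less than `1`, so on `I_j` we have
`|log₂ a - log₂ d| > |j - i(a)| - 1`, and the weight `2^{-|log₂ a - log₂ d|/2}` is at most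
`√2 · c^{|j - i(a)|} = 2c · c^{|j - i(a)|}`.
-/

open Finset Real

lemma natAbs_floor_sub_floor_lt (x y : ℝ) : ((⌊y⌋ - ⌊x⌋).natAbs : ℝ) < |x - y| + 1 := by
  rw [Nat.cast_natAbs, Int.cast_abs, Int.cast_sub, abs_sub_comm, abs_sub_lt_iff]
  constructor <;> linarith [Int.floor_le x, Int.floor_le y, Int.lt_floor_add_one x,
    Int.lt_floor_add_one y, le_abs_self (x - y), neg_abs_le (x - y)]

lemma two_rpow_neg_abs_sub_div_two_le (x y : ℝ) :
    (2 : ℝ) ^ (-|x - y| / 2) ≤ 2 * (√2)⁻¹ * (√2)⁻¹ ^ (⌊y⌋ - ⌊x⌋).natAbs := by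
  set k := (⌊y⌋ - ⌊x⌋).natAbs
  have hinv : (√2)⁻¹ = (2 : ℝ) ^ (-(1 / 2) : ℝ) := by
    rw [sqrt_eq_rpow, rpow_neg zero_le_two]
  calc (2 : ℝ) ^ (-|x - y| / 2) ≤ 2 ^ (1 + -(1 / 2) + -(1 / 2) * (k : ℝ)) :=
        rpow_le_rpow_of_exponent_le one_le_two (by linarith [natAbs_floor_sub_floor_lt x y])
    _ = 2 * (√2)⁻¹ * (√2)⁻¹ ^ k := by
        rw [rpow_add two_pos, rpow_add two_pos, rpow_one, rpow_mul zero_le_two, rpow_natCast, hinv]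

lemma mem_Ico_pow_min_iff {b : ℕ} (hb : 1 < b) (n j d : ℕ) :
    d ∈ Ico (b ^ j) (min (b ^ (j + 1)) (n + 1)) ↔ d ∈ Icc 1 n ∧ Nat.log b d = j := by
  simp only [mem_Ico, mem_Icc, lt_min_iff]
  constructor
  · rintro ⟨hjd, hdj, hdn⟩
    exact ⟨⟨(Nat.one_le_pow _ _ (by omega)).trans hjd, by omega⟩,
      Nat.log_eq_of_pow_le_of_lt_pow hjd hdj⟩
  · rintro ⟨⟨hd, hdn⟩, rfl⟩
    exact ⟨Nat.pow_log_le_self b (by omega), Nat.lt_pow_succ_log_self hb d, by omega⟩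

lemma sum_Icc_one_eq_sum_range_log_sum_Ico {M : Type*} [AddCommMonoid M] {b : ℕ} (hb : 1 < b)
    (n : ℕ) (f : ℕ → M) :
    ∑ d ∈ Icc 1 n, f d =
      ∑ j ∈ range (Nat.log b n + 1), ∑ d ∈ Ico (b ^ j) (min (b ^ (j + 1)) (n + 1)), f d := by
  rw [← sum_fiberwise_of_maps_to (g := Nat.log b) (t := range (Nat.log b n + 1))]
  · refine sum_congr rfl fun j _ => sum_congr ?_ fun _ _ => rfl
    ext d
    rw [mem_filter, mem_Ico_pow_min_iff hb]
  · intro d hd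
    exact mem_range_succ_iff.2 (Nat.log_mono_right (mem_Icc.1 hd).2)

theorem stmt12_general (n : ℕ) (μ : ℕ → ℝ)
    (hμ0 : ∀ d, 0 ≤ μ d)
    (a : ℕ) :
    ∑ d ∈ Finset.Icc 1 n, μ d * (2 : ℝ) ^ (-(|Real.logb 2 a - Real.logb 2 d|) / 2) ≤
      2 * (Real.sqrt 2)⁻¹ *
        ∑ j ∈ Finset.range (Nat.log 2 n + 1),
          (∑ d ∈ Finset.Ico (2 ^ j) (min (2 ^ (j + 1)) (n + 1)), μ d) *
            ((Real.sqrt 2)⁻¹) ^ ((j : ℤ) - (Nat.log 2 a : ℤ)).natAbs := by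
  have hfloor (m : ℕ) : ⌊logb 2 (m : ℝ)⌋ = Nat.log 2 m := by
    exact_mod_cast Real.floor_logb_natCast (b := 2) (Nat.cast_nonneg m)
  rw [sum_Icc_one_eq_sum_range_log_sum_Ico one_lt_two, mul_sum]
  refine sum_le_sum fun j _ => ?_
  rw [sum_mul, mul_sum]
  refine sum_le_sum fun d hd => ?_
  obtain ⟨-, rfl⟩ := (mem_Ico_pow_min_iff one_lt_two n j d).1 hd
  calc μ d * (2 : ℝ) ^ (-|logb 2 a - logb 2 d| / 2)
      ≤ μ d * (2 * (√2)⁻¹ * (√2)⁻¹ ^ (⌊logb 2 (d : ℝ)⌋ - ⌊logb 2 (a : ℝ)⌋).natAbs) :=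
        mul_le_mul_of_nonneg_left (two_rpow_neg_abs_sub_div_two_le _ _) (hμ0 d)
    _ = _ := by rw [hfloor, hfloor]; ring

/-- `σ_a ≤ 2c · Σ_{0≤j≤L} p_j·c^{|j - i(a)|}` with `c = 1/√2`, `i(a) = ⌊log₂ a⌋`,
`L = ⌊log₂ n⌋`, `p_j` the `μ`-mass of the dyadic interval `I_j`
(`I_j = [2^j, 2^{j+1})` for `j < L`, `I_L = [2^L, n]`). Here
`σ_a = Σ_{1≤d≤n} μ(d)·2^{-|log₂ a - log₂ d|/2}`. -/
theorem stmt12 (n : ℕ) (hn : 1 ≤ n) (μ : ℕ → ℝ)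
    (hμ0 : ∀ d, 0 ≤ μ d)
    (hsupp : ∀ d, d ∉ Finset.Icc 1 n → μ d = 0)
    (hsum : ∑ d ∈ Finset.Icc 1 n, μ d = 1)
    (a : ℕ) (ha : a ∈ Finset.Icc 1 n) :
    ∑ d ∈ Finset.Icc 1 n, μ d * (2 : ℝ) ^ (-(|Real.logb 2 a - Real.logb 2 d|) / 2) ≤
      2 * (Real.sqrt 2)⁻¹ *
        ∑ j ∈ Finset.range (Nat.log 2 n + 1),
          (∑ d ∈ Finset.Ico (2 ^ j) (min (2 ^ (j + 1)) (n + 1)), μ d) *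
            ((Real.sqrt 2)⁻¹) ^ ((j : ℤ) - (Nat.log 2 a : ℤ)).natAbs :=
  stmt12_general n μ hμ0 a
end

section
/- For every s ∈ {1,...,n}, the 'jump to zero' contribution satisfies Δ(s,0) = (F(s)/s)·Φ(s) < 2, where F(s) = Σ_{d≤s} μ(d) and Φ(s) = Σ_{a≤s} φ_a with φ_a = 1/(a·σ_a), σ_a = Σ_{b≤a} μ(b)√(b/a) + Σ_{a<b≤n} μ(b)√(a/b). -/
lemma harmonic_le (s : ℕ) (hs : 1 ≤ s) :
    ∑ a ∈ Finset.Icc 1 s, 1 / (a : ℝ) ≤ 2 * Real.sqrt s - 1 := by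
  induction s, hs using Nat.le_induction with
  | base => norm_num
  | succ s hs ih =>
    rw [Finset.sum_Icc_succ_top (by omega)]
    have hx : Real.sqrt s ^ 2 = (s : ℝ) := Real.sq_sqrt (by positivity)
    have hy : Real.sqrt (s + 1 : ℕ) ^ 2 = ((s : ℝ) + 1) := by
      rw [Real.sq_sqrt (by positivity)]; push_cast; ring
    have hx0 : 0 ≤ Real.sqrt s := Real.sqrt_nonneg _
    have hy1 : 1 ≤ Real.sqrt (s + 1 : ℕ) := by
      rw [show (1:ℝ) = Real.sqrt 1 by simp]
      exact Real.sqrt_le_sqrt (by push_cast; linarith)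
    have hkey : 1 / ((s : ℝ) + 1) ≤ 2 * (Real.sqrt (s + 1 : ℕ) - Real.sqrt s) := by
      rw [div_le_iff₀ (by positivity)]
      nlinarith [sq_nonneg (Real.sqrt (s + 1 : ℕ) - Real.sqrt s)]
    have : ((s : ℝ) + 1 : ℝ) = ((s + 1 : ℕ) : ℝ) := by push_cast; ring
    rw [this] at hkey
    push_cast
    push_cast at ih hkey
    linarith

lemma sigma_pos (n : ℕ) (μ : ℕ → ℝ) (hμ0 : ∀ d, 0 ≤ μ d) (hμ1 : 0 < μ 1)
    (a : ℕ) (ha : 1 ≤ a) : 0 < sigma n μ a := by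
  have ha0 : (0:ℝ) < a := by exact_mod_cast Nat.lt_of_lt_of_le Nat.zero_lt_one ha
  have h1 : 0 < μ 1 * Real.sqrt (((1:ℕ) : ℝ) / a) := by
    apply mul_pos hμ1
    apply Real.sqrt_pos.2
    exact div_pos (by norm_num) ha0
  have hS1 : μ 1 * Real.sqrt (((1:ℕ) : ℝ) / a) ≤
      ∑ d ∈ Finset.Icc 1 a, μ d * Real.sqrt ((d : ℝ) / a) := by
    apply Finset.single_le_sum (f := fun d => μ d * Real.sqrt ((d : ℝ) / a))
    · intro i _; exact mul_nonneg (hμ0 i) (Real.sqrt_nonneg _)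
    · simpa using ha
  have hS2 : 0 ≤ ∑ d ∈ Finset.Ioc a n, μ d * Real.sqrt ((a : ℝ) / d) := by
    apply Finset.sum_nonneg; intro i _; exact mul_nonneg (hμ0 i) (Real.sqrt_nonneg _)
  unfold sigma
  calc (0:ℝ) < μ 1 * Real.sqrt (((1:ℕ) : ℝ) / a) := h1
  _ ≤ _ := by linarith

lemma F_le_sqrt_mul_sigma (n : ℕ) (μ : ℕ → ℝ) (hμ0 : ∀ d, 0 ≤ μ d)
    (s : ℕ) (hsn : s ≤ n) (a : ℕ) (ha1 : 1 ≤ a) (has : a ≤ s) :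
    ∑ d ∈ Finset.Icc 1 s, μ d ≤ Real.sqrt s * sigma n μ a := by
  have hs1 : 1 ≤ s := le_trans ha1 has
  have hsplit : ∑ d ∈ Finset.Ioc a n, μ d * Real.sqrt ((a : ℝ) / d)
      = ∑ d ∈ Finset.Ioc a s, μ d * Real.sqrt ((a : ℝ) / d)
        + ∑ d ∈ Finset.Ioc s n, μ d * Real.sqrt ((a : ℝ) / d) :=
    (Finset.sum_Ioc_consecutive _ has hsn).symm
  have hFsplit : ∑ d ∈ Finset.Icc 1 s, μ d
      = ∑ d ∈ Finset.Icc 1 a, μ d + ∑ d ∈ Finset.Ioc a s, μ d := by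
    rw [show Finset.Icc 1 s = Finset.Ioc 0 s by rfl,
        show Finset.Icc 1 a = Finset.Ioc 0 a by rfl]
    exact (Finset.sum_Ioc_consecutive _ (Nat.zero_le a) has).symm
  unfold sigma
  rw [hsplit, hFsplit, mul_add, mul_add]
  have hnn : 0 ≤ Real.sqrt s * ∑ d ∈ Finset.Ioc s n, μ d * Real.sqrt ((a : ℝ) / d) := by
    apply mul_nonneg (Real.sqrt_nonneg _)
    apply Finset.sum_nonneg; intro i _; exact mul_nonneg (hμ0 i) (Real.sqrt_nonneg _)
  have h1 : ∑ d ∈ Finset.Icc 1 a, μ d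
      ≤ Real.sqrt s * ∑ d ∈ Finset.Icc 1 a, μ d * Real.sqrt ((d : ℝ) / a) := by
    rw [Finset.mul_sum]
    apply Finset.sum_le_sum
    intro b hb
    simp only [Finset.mem_Icc] at hb
    have hb1 : (1:ℝ) ≤ b := by exact_mod_cast hb.1
    have hba : (b:ℝ) ≤ a := by exact_mod_cast hb.2
    have ha0 : (0:ℝ) < a := by exact_mod_cast Nat.lt_of_lt_of_le Nat.zero_lt_one ha1
    have hsr : (a:ℝ) ≤ (s:ℝ) := by exact_mod_cast has
    have : (1:ℝ) ≤ Real.sqrt s * Real.sqrt ((b : ℝ) / a) := by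
      rw [← Real.sqrt_mul (by positivity)]
      rw [show (1:ℝ) = Real.sqrt 1 by simp]
      apply Real.sqrt_le_sqrt
      rw [← mul_div_assoc, le_div_iff₀ ha0, one_mul]
      nlinarith
    calc μ b = μ b * 1 := (mul_one _).symm
    _ ≤ μ b * (Real.sqrt s * Real.sqrt ((b : ℝ) / a)) :=
        mul_le_mul_of_nonneg_left this (hμ0 b)
    _ = Real.sqrt s * (μ b * Real.sqrt ((b : ℝ) / a)) := by ring
  have h2 : ∑ d ∈ Finset.Ioc a s, μ d
      ≤ Real.sqrt s * ∑ d ∈ Finset.Ioc a s, μ d * Real.sqrt ((a : ℝ) / d) := by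
    rw [Finset.mul_sum]
    apply Finset.sum_le_sum
    intro b hb
    simp only [Finset.mem_Ioc] at hb
    have hab : (a:ℝ) < b := by exact_mod_cast hb.1
    have hbs : (b:ℝ) ≤ s := by exact_mod_cast hb.2
    have ha1' : (1:ℝ) ≤ a := by exact_mod_cast ha1
    have hb0 : (0:ℝ) < b := by linarith
    have : (1:ℝ) ≤ Real.sqrt s * Real.sqrt ((a : ℝ) / b) := by
      rw [← Real.sqrt_mul (by positivity)]
      rw [show (1:ℝ) = Real.sqrt 1 by simp]
      apply Real.sqrt_le_sqrt
      rw [← mul_div_assoc, le_div_iff₀ hb0, one_mul]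
      nlinarith
    calc μ b = μ b * 1 := (mul_one _).symm
    _ ≤ μ b * (Real.sqrt s * Real.sqrt ((a : ℝ) / b)) :=
        mul_le_mul_of_nonneg_left this (hμ0 b)
    _ = Real.sqrt s * (μ b * Real.sqrt ((a : ℝ) / b)) := by ring
  linarith

/-- The "jump to zero" contribution to the expected potential drop is bounded:
`Δ(s,0) = (F(s)/s)·Φ(s) < 2` for every `s ∈ [1,n]`. -/
theorem stmt13 (n : ℕ) (hn : 1 ≤ n) (μ : ℕ → ℝ)
    (hμ0 : ∀ d, 0 ≤ μ d)
    (hsupp : ∀ d, d ∉ Finset.Icc 1 n → μ d = 0)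
    (hsum : ∑ d ∈ Finset.Icc 1 n, μ d = 1)
    (hμ1 : 0 < μ 1)
    (s : ℕ) (hs : s ∈ Finset.Icc 1 n) :
    (∑ d ∈ Finset.Icc 1 s, μ d) / (s : ℝ) * Phi n μ s < 2 := by
  simp only [Finset.mem_Icc] at hs
  obtain ⟨hs1, hsn⟩ := hs
  set F := ∑ d ∈ Finset.Icc 1 s, μ d with hF
  have hspos : (0:ℝ) < s := by exact_mod_cast Nat.lt_of_lt_of_le Nat.zero_lt_one hs1
  have hsq : 0 < Real.sqrt s := Real.sqrt_pos.2 hspos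
  have hsqsq : Real.sqrt s * Real.sqrt s = (s:ℝ) := Real.mul_self_sqrt (le_of_lt hspos)
  -- termwise bound : F * (1/(a σ_a)) ≤ √s * (1/a)
  have hterm : ∀ a ∈ Finset.Icc 1 s,
      F * (1 / ((a : ℝ) * sigma n μ a)) ≤ Real.sqrt s * (1 / (a : ℝ)) := by
    intro a ha
    simp only [Finset.mem_Icc] at ha
    have ha1 := ha.1
    have has := ha.2
    have ha0 : (0:ℝ) < a := by exact_mod_cast Nat.lt_of_lt_of_le Nat.zero_lt_one ha1
    have hσ : 0 < sigma n μ a := sigma_pos n μ hμ0 hμ1 a ha1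
    have hkey := F_le_sqrt_mul_sigma n μ hμ0 s hsn a ha1 has
    rw [mul_one_div, mul_one_div, div_le_div_iff₀ (by positivity) ha0]
    calc F * (a:ℝ) ≤ (Real.sqrt s * sigma n μ a) * a := by
          apply mul_le_mul_of_nonneg_right hkey (le_of_lt ha0)
    _ = Real.sqrt s * ((a:ℝ) * sigma n μ a) := by ring
  have hsum2 : F * Phi n μ s ≤ Real.sqrt s * ∑ a ∈ Finset.Icc 1 s, 1 / (a : ℝ) := by
    unfold Phi
    rw [Finset.mul_sum, Finset.mul_sum]
    exact Finset.sum_le_sum hterm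
  have hharm := harmonic_le s hs1
  have hbound : F * Phi n μ s ≤ 2 * (s:ℝ) - Real.sqrt s := by
    calc F * Phi n μ s ≤ Real.sqrt s * ∑ a ∈ Finset.Icc 1 s, 1 / (a : ℝ) := hsum2
    _ ≤ Real.sqrt s * (2 * Real.sqrt s - 1) :=
        mul_le_mul_of_nonneg_left hharm (le_of_lt hsq)
    _ = 2 * (s:ℝ) - Real.sqrt s := by rw [mul_sub, mul_one, ← mul_assoc,
        mul_comm (Real.sqrt s) 2, mul_assoc, hsqsq]
  have : F / (s:ℝ) * Phi n μ s = F * Phi n μ s / (s:ℝ) := by ring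
  rw [this, div_lt_iff₀ hspos]
  linarith
end

section
/- For every 1 ≤ a ≤ s ≤ n, γ_a := φ_a · Σ_{1≤x<a} μ(s−x)·x ≤ √(s/(s−a+1)) + √(s/a), where φ_a = 1/(a·σ_a) and σ_a = Σ_{b≤a} μ(b)·√(b/a) + Σ_{a<b≤n} μ(b)·√(a/b). -/
open Finset Real

lemma mul_sqrt_eq_sqrt_sq_mul {a y : ℝ} (ha : 0 ≤ a) : a * √y = √(a ^ 2 * y) := by
  rw [sqrt_mul (sq_nonneg a), sqrt_sq ha]

lemma le_sqrt_div_mul_mul_sqrt_div_of_sq_le {x a b c s : ℝ} (hxs : x ^ 2 ≤ s * a)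
    (hs : 0 ≤ s) (ha : 0 ≤ a) (hc : 0 < c) (hcb : c ≤ b) :
    x ≤ √(s / c) * (a * √(b / a)) := by
  have hprod : √(s / c) * (a * √(b / a)) = √(s * a * (b / c)) := by
    rw [mul_sqrt_eq_sqrt_sq_mul ha, ← sqrt_mul (by positivity)]
    rcases ha.eq_or_lt with rfl | ha
    · simp
    · congr 1; field_simp
  rw [hprod]
  refine le_sqrt_of_sq_le (hxs.trans (le_mul_of_one_le_right (by positivity) ?_))
  rwa [one_le_div hc]

lemma le_sqrt_div_mul_mul_sqrt_self_div_of_le {x a b s : ℝ} (hx : 0 ≤ x) (hxa : x ≤ a)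
    (hb : 0 < b) (hbs : b ≤ s) :
    x ≤ √(s / a) * (a * √(a / b)) := by
  have ha : 0 ≤ a := hx.trans hxa
  have hprod : √(s / a) * (a * √(a / b)) = √(a ^ 2 * (s / b)) := by
    rw [mul_sqrt_eq_sqrt_sq_mul ha, ← sqrt_mul (div_nonneg (hb.le.trans hbs) ha)]
    rcases ha.eq_or_lt with rfl | ha
    · simp
    · congr 1; field_simp
  rw [hprod]
  refine le_sqrt_of_sq_le ((pow_le_pow_left₀ hx hxa 2).trans
    (le_mul_of_one_le_right (sq_nonneg a) ?_))
  rwa [one_le_div hb]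

noncomputable def sigmaWeight (a d : ℕ) : ℝ :=
  if d ≤ a then √((d : ℝ) / a) else √((a : ℝ) / d)

lemma sigmaWeight_nonneg (a d : ℕ) : 0 ≤ sigmaWeight a d := by
  unfold sigmaWeight; split_ifs <;> positivity

lemma sigma_eq_sum_mul_sigmaWeight {n a : ℕ} (μ : ℕ → ℝ) (ha : 1 ≤ a) (han : a ≤ n) :
    sigma n μ a = ∑ d ∈ Icc 1 n, μ d * sigmaWeight a d := by
  have hsplit : Icc 1 n = Icc 1 a ∪ Ioc a n := by
    ext d; simp only [mem_Icc, mem_union, mem_Ioc]; omega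
  rw [hsplit, sum_union (disjoint_left.2 fun d hd hd' => by simp_all; omega), sigma]
  congr 1 <;> refine sum_congr rfl fun d hd => ?_ <;> simp_all [sigmaWeight]

lemma sigma_nonneg {n a : ℕ} {μ : ℕ → ℝ} (hμ : ∀ d, 0 ≤ μ d) : 0 ≤ sigma n μ a := by
  unfold sigma
  exact add_nonneg (sum_nonneg fun d _ => mul_nonneg (hμ d) (sqrt_nonneg _))
    (sum_nonneg fun d _ => mul_nonneg (hμ d) (sqrt_nonneg _))

lemma sum_Ico_comp_sub_le_sum_Icc {f : ℕ → ℝ} {n s a : ℕ} (hf : ∀ d ∈ Icc 1 n, 0 ≤ f d)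
    (has : a ≤ s) (hsn : s ≤ n) :
    ∑ x ∈ Ico 1 a, f (s - x) ≤ ∑ d ∈ Icc 1 n, f d := by
  rw [← sum_image (f := f) fun x hx y hy hxy => by simp_all; omega]
  refine sum_le_sum_of_subset_of_nonneg (fun d hd => ?_) fun d hd _ => hf d hd
  simp only [mem_image, mem_Ico] at hd
  obtain ⟨x, hx, rfl⟩ := hd
  simp only [mem_Icc]; omega

lemma natCast_le_mul_sigmaWeight_sub {s a x : ℕ} (hx : 1 ≤ x) (hxa : x < a) (has : a ≤ s) :
    (x : ℝ) ≤ (√((s : ℝ) / ((s : ℝ) - a + 1)) + √((s : ℝ) / a)) * (a * sigmaWeight a (s - x)) := by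
  have hxs : x ≤ s := by omega
  have hx' : (1 : ℝ) ≤ x := by exact_mod_cast hx
  have hxa' : (x : ℝ) + 1 ≤ a := by exact_mod_cast hxa
  have has' : (a : ℝ) ≤ s := by exact_mod_cast has
  rw [add_mul]
  unfold sigmaWeight
  split_ifs with h
  · refine le_add_of_le_of_nonneg ?_ (by positivity)
    rw [Nat.cast_sub hxs]
    exact le_sqrt_div_mul_mul_sqrt_div_of_sq_le (by nlinarith) (by positivity) (by positivity)
      (by linarith) (by linarith)
  · refine le_add_of_nonneg_of_le (by positivity) ?_
    exact le_sqrt_div_mul_mul_sqrt_self_div_of_le (by positivity) (by linarith)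
      (Nat.cast_pos.2 (by omega)) (by exact_mod_cast Nat.sub_le s x)

theorem stmt15_general (n : ℕ) (μ : ℕ → ℝ)
    (hμ0 : ∀ d, 0 ≤ μ d)
    (s : ℕ) (hs : s ∈ Finset.Icc 1 n)
    (a : ℕ) (ha : a ∈ Finset.Icc 1 s) :
    (1 / ((a : ℝ) * sigma n μ a)) * ∑ x ∈ Finset.Ico 1 a, μ (s - x) * (x : ℝ) ≤
      Real.sqrt ((s : ℝ) / ((s : ℝ) - a + 1)) + Real.sqrt ((s : ℝ) / a) := by
  obtain ⟨-, hsn⟩ := mem_Icc.1 hs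
  obtain ⟨ha1, has⟩ := mem_Icc.1 ha
  set R := √((s : ℝ) / ((s : ℝ) - a + 1)) + √((s : ℝ) / a)
  rw [one_div_mul_eq_div]
  refine div_le_of_le_mul₀ (mul_nonneg a.cast_nonneg (sigma_nonneg hμ0)) (by positivity) ?_
  calc ∑ x ∈ Ico 1 a, μ (s - x) * (x : ℝ)
      ≤ ∑ x ∈ Ico 1 a, μ (s - x) * (R * (a * sigmaWeight a (s - x))) := by
        refine sum_le_sum fun x hx => mul_le_mul_of_nonneg_left ?_ (hμ0 _)
        obtain ⟨hx1, hxa⟩ := mem_Ico.1 hx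
        exact natCast_le_mul_sigmaWeight_sub hx1 hxa has
    _ = R * a * ∑ x ∈ Ico 1 a, μ (s - x) * sigmaWeight a (s - x) := by
        rw [mul_sum]; exact sum_congr rfl fun x _ => by ring
    _ ≤ R * a * sigma n μ a := by
        rw [sigma_eq_sum_mul_sigmaWeight μ ha1 (has.trans hsn)]
        exact mul_le_mul_of_nonneg_left (sum_Ico_comp_sub_le_sum_Icc
          (fun d _ => mul_nonneg (hμ0 d) (sigmaWeight_nonneg a d)) has hsn) (by positivity)
    _ = R * (a * sigma n μ a) := mul_assoc ..

/-- For `1 ≤ a ≤ s ≤ n`, `γ_a = φ_a · Σ_{1≤x<a} μ(s-x)·x ≤ √(s/(s-a+1)) + √(s/a)`,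
where `φ_a = 1/(a·σ_a)`. -/
theorem stmt15 (n : ℕ) (hn : 1 ≤ n) (μ : ℕ → ℝ)
    (hμ0 : ∀ d, 0 ≤ μ d)
    (hsupp : ∀ d, d ∉ Finset.Icc 1 n → μ d = 0)
    (hsum : ∑ d ∈ Finset.Icc 1 n, μ d = 1)
    (hμ1 : 0 < μ 1)
    (s : ℕ) (hs : s ∈ Finset.Icc 1 n)
    (a : ℕ) (ha : a ∈ Finset.Icc 1 s) :
    (1 / ((a : ℝ) * sigma n μ a)) * ∑ x ∈ Finset.Ico 1 a, μ (s - x) * (x : ℝ) ≤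
      Real.sqrt ((s : ℝ) / ((s : ℝ) - a + 1)) + Real.sqrt ((s : ℝ) / a) :=
  stmt15_general n μ hμ0 s hs a ha
end

section
/- One-sided Wald-type inequality: let X₁, X₂, ... be random variables with bounded range, g > 0, and T = min{t : X₁+...+X_t ≥ g}. If E(T) < ∞ and E(X_t | T ≥ t) ≤ C for all t ∈ ℕ (with C > 0), then E(T) ≥ g/C. -/
/-!
On every path the stopped sum `S_T = X₁ + ⋯ + X_T` is at least `g`, so `g ≤ E[S_T]`. Writing
`S_T = ∑_{t ≥ 1} X_t 1_{T ≥ t}` and `T = ∑_{t ≥ 1} 1_{T ≥ t}` and exchanging sum and expectation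
(legitimate because `|X_t| ≤ M` and `E[T] < ∞`) gives
`E[S_T] = ∑_t E[X_t 1_{T ≥ t}] ≤ C ∑_t P(T ≥ t) = C E[T]`.
-/

open MeasureTheory Finset Filter ENNReal

theorem hasSum_ite_add_one_le {M : Type*} [AddCommMonoid M] [TopologicalSpace M] (x : ℕ → M)
    (n : ℕ) : HasSum (fun t => if t + 1 ≤ n then x (t + 1) else 0) (∑ i ∈ Icc 1 n, x i) := by
  have hsum : ∑ t ∈ range n, (if t + 1 ≤ n then x (t + 1) else 0) = ∑ i ∈ Icc 1 n, x i := by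
    rw [sum_ite_of_true fun t ht => Nat.succ_le_of_lt (mem_range.1 ht), range_eq_Ico,
      sum_Ico_add', zero_add, Ico_add_one_right_eq_Icc]
  rw [← hsum]
  exact hasSum_sum_of_ne_finset_zero fun t ht => if_neg (by simpa using ht)

theorem measurable_sInf_setOf {Ω : Type*} [MeasurableSpace Ω] {p : Ω → ℕ → Prop}
    (hp : ∀ ω, ∃ n, p ω n) (hm : ∀ n, MeasurableSet {ω | p ω n}) :
    Measurable fun ω => sInf {n | p ω n} := by
  classical
  have hfind : (fun ω => sInf {n | p ω n}) = fun ω => Nat.find (hp ω) :=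
    funext fun ω => Nat.sInf_def (hp ω)
  rw [hfind]
  exact measurable_find hp hm

section StoppedSum

variable {Ω : Type*} {T : Ω → ℕ}

def stoppedSum {M : Type*} [AddCommMonoid M] (Y : ℕ → Ω → M) (T : Ω → ℕ) (ω : Ω) : M :=
  ∑ i ∈ Icc 1 (T ω), Y i ω

theorem hasSum_indicator_stoppedSum {M : Type*} [AddCommMonoid M] [TopologicalSpace M]
    (Y : ℕ → Ω → M) (T : Ω → ℕ) (ω : Ω) :
    HasSum (fun t => {ω | t + 1 ≤ T ω}.indicator (Y (t + 1)) ω) (stoppedSum Y T ω) := by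
  simpa only [Set.indicator_apply, Set.mem_ofPred_eq, stoppedSum] using
    hasSum_ite_add_one_le (Y · ω) (T ω)

variable [MeasurableSpace Ω] {P : Measure Ω} {E : Type*} [NormedAddCommGroup E] {Y : ℕ → Ω → E}

theorem aestronglyMeasurable_stoppedSum (hY : ∀ t, AEStronglyMeasurable (Y t) P)
    (hT : Measurable T) : AEStronglyMeasurable (stoppedSum Y T) P :=
  aestronglyMeasurable_of_tendsto_ae atTop
    (f := fun n ω => ∑ t ∈ range n, {ω | t + 1 ≤ T ω}.indicator (Y (t + 1)) ω)
    (fun _ => aestronglyMeasurable_fun_sum _ fun t _ =>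
      (hY (t + 1)).indicator (measurableSet_le measurable_const hT))
    (ae_of_all _ fun ω => (hasSum_indicator_stoppedSum Y T ω).tendsto_sum_nat)

theorem integrable_stoppedSum (hY : ∀ t, AEStronglyMeasurable (Y t) P) (hT : Measurable T)
    (hfin : ∫⁻ ω, stoppedSum (fun i ω => ‖Y i ω‖ₑ) T ω ∂P ≠ ∞) :
    Integrable (stoppedSum Y T) P :=
  ⟨aestronglyMeasurable_stoppedSum hY hT,
    (lintegral_mono fun _ => enorm_sum_le _ _).trans_lt hfin.lt_top⟩

theorem lintegral_stoppedSum_enorm_le {C : ℝ} (hY : ∀ t ω, ‖Y t ω‖ ≤ C) :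
    ∫⁻ ω, stoppedSum (fun i ω => ‖Y i ω‖ₑ) T ω ∂P ≤ (∫⁻ ω, (T ω : ℝ≥0∞) ∂P) * ENNReal.ofReal C := by
  rw [← lintegral_mul_const' _ _ ofReal_ne_top]
  refine lintegral_mono fun ω => ?_
  calc stoppedSum (fun i ω => ‖Y i ω‖ₑ) T ω ≤ ∑ _i ∈ Icc 1 (T ω), ENNReal.ofReal C :=
        sum_le_sum fun i _ => (ofReal_norm (Y i ω)).symm.trans_le (ofReal_le_ofReal (hY i ω))
    _ = T ω * ENNReal.ofReal C := by simp

theorem hasSum_setIntegral_stoppedSum [NormedSpace ℝ E] [CompleteSpace E]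
    (hY : ∀ t, AEStronglyMeasurable (Y t) P) (hT : Measurable T)
    (hfin : ∫⁻ ω, stoppedSum (fun i ω => ‖Y i ω‖ₑ) T ω ∂P ≠ ∞) :
    HasSum (fun t => ∫ ω in {ω | t + 1 ≤ T ω}, Y (t + 1) ω ∂P) (∫ ω, stoppedSum Y T ω ∂P) := by
  set F : ℕ → Ω → E := fun t => {ω | t + 1 ≤ T ω}.indicator (Y (t + 1))
  have hA : ∀ t, MeasurableSet {ω | t + 1 ≤ T ω} := fun t => measurableSet_le measurable_const hT
  have hF : ∀ t, AEStronglyMeasurable (F t) P := fun t => (hY (t + 1)).indicator (hA t)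
  have hnorm : ∑' t, ∫⁻ ω, ‖F t ω‖ₑ ∂P ≠ ∞ := by
    rwa [← lintegral_tsum fun t => (hF t).enorm, lintegral_congr fun ω => ?_]
    simp only [F, enorm_indicator_eq_indicator_enorm]
    exact (hasSum_indicator_stoppedSum (fun i ω => ‖Y i ω‖ₑ) T ω).tsum_eq
  have hsummable : Summable fun t => ∫ ω, F t ω ∂P :=
    .of_norm_bounded (ENNReal.summable_toReal hnorm) fun t =>
      toReal_mono (ne_top_of_le_ne_top hnorm (ENNReal.le_tsum t))
        (enorm_integral_le_lintegral_enorm _)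
  convert hsummable.hasSum using 1
  · exact funext fun t => (integral_indicator (hA t)).symm
  · rw [← integral_tsum hF hnorm]
    exact integral_congr_ae (ae_of_all _ fun ω => (hasSum_indicator_stoppedSum Y T ω).tsum_eq.symm)

theorem hasSum_measureReal_add_one_le (hT : Measurable T) (hfin : ∫⁻ ω, (T ω : ℝ≥0∞) ∂P ≠ ∞) :
    HasSum (fun t => P.real {ω | t + 1 ≤ T ω}) (∫ ω, (T ω : ℝ) ∂P) := by
  have h := hasSum_setIntegral_stoppedSum (Y := fun _ _ => (1 : ℝ)) (P := P)
    (fun _ => aestronglyMeasurable_const) hT (by simpa [stoppedSum] using hfin)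
  simpa [stoppedSum] using h

end StoppedSum

theorem stmt18_general {Ω : Type*} [MeasurableSpace Ω] (P : Measure Ω) [IsProbabilityMeasure P]
    (X : ℕ → Ω → ℝ) (hXmeas : ∀ t, Measurable (X t))
    (M : ℝ) (hbdd : ∀ t ω, |X t ω| ≤ M)
    (g C : ℝ) (hC : 0 < C)
    (T : Ω → ℕ)
    (hT : ∀ ω, T ω = sInf {t : ℕ | g ≤ ∑ i ∈ Finset.Icc 1 t, X i ω})
    (hTfin : ∀ ω, ∃ t : ℕ, g ≤ ∑ i ∈ Finset.Icc 1 t, X i ω)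
    (hTint : Integrable (fun ω => (T ω : ℝ)) P)
    (hcond : ∀ t : ℕ, 1 ≤ t →
      ∫ ω in {ω | t ≤ T ω}, X t ω ∂P ≤ C * (P {ω | t ≤ T ω}).toReal) :
    g / C ≤ ∫ ω, (T ω : ℝ) ∂P := by
  have hTmeas : Measurable T := funext hT ▸ measurable_sInf_setOf hTfin fun _ =>
    measurableSet_le measurable_const (Finset.measurable_sum _ fun i _ => hXmeas i)
  have hT_lint : ∫⁻ ω, (T ω : ℝ≥0∞) ∂P ≠ ∞ := by
    simpa using hTint.lintegral_lt_top.ne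
  have hX_lint : ∫⁻ ω, stoppedSum (fun i ω => ‖X i ω‖ₑ) T ω ∂P ≠ ∞ :=
    ne_top_of_le_ne_top (mul_ne_top hT_lint ofReal_ne_top) (lintegral_stoppedSum_enorm_le hbdd)
  have hXae : ∀ t, AEStronglyMeasurable (X t) P := fun t => (hXmeas t).aestronglyMeasurable
  have hg_le : ∀ ω, g ≤ stoppedSum X T ω := fun ω => by
    rw [stoppedSum, hT ω]; exact Nat.sInf_mem (hTfin ω)
  have hwald : ∫ ω, stoppedSum X T ω ∂P ≤ C * ∫ ω, (T ω : ℝ) ∂P :=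
    hasSum_le (fun t => hcond (t + 1) t.succ_pos)
      (hasSum_setIntegral_stoppedSum hXae hTmeas hX_lint)
      ((hasSum_measureReal_add_one_le hTmeas hT_lint).mul_left C)
  rw [div_le_iff₀' hC]
  calc g = ∫ _, g ∂P := by simp
    _ ≤ ∫ ω, stoppedSum X T ω ∂P :=
      integral_mono (integrable_const g) (integrable_stoppedSum hXae hTmeas hX_lint) hg_le
    _ ≤ C * ∫ ω, (T ω : ℝ) ∂P := hwald

/-- One-sided Wald-type inequality: if `X₁, X₂, ...` have bounded range,
`T = min{t : X₁+...+X_t ≥ g}` with `g > 0`, `E(T) < ∞`, and `E(X_t·1_{T≥t}) ≤ C·P(T ≥ t)`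
for all `t` (i.e. `E(X_t | T ≥ t) ≤ C`), then `E(T) ≥ g/C`. -/
theorem stmt18 {Ω : Type*} [MeasurableSpace Ω] (P : Measure Ω) [IsProbabilityMeasure P]
    (X : ℕ → Ω → ℝ) (hXmeas : ∀ t, Measurable (X t))
    (M : ℝ) (hbdd : ∀ t ω, |X t ω| ≤ M)
    (g C : ℝ) (hg : 0 < g) (hC : 0 < C)
    (T : Ω → ℕ)
    (hT : ∀ ω, T ω = sInf {t : ℕ | g ≤ ∑ i ∈ Finset.Icc 1 t, X i ω})
    (hTfin : ∀ ω, ∃ t : ℕ, g ≤ ∑ i ∈ Finset.Icc 1 t, X i ω)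
    (hTint : Integrable (fun ω => (T ω : ℝ)) P)
    (hcond : ∀ t : ℕ, 1 ≤ t →
      ∫ ω in {ω | t ≤ T ω}, X t ω ∂P ≤ C * (P {ω | t ≤ T ω}).toReal) :
    g / C ≤ ∫ ω, (T ω : ℝ) ∂P :=
  stmt18_general P X hXmeas M hbdd g C hC T hT hTfin hTint hcond
end
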